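/- arXiv:2504.01223 — 3 statements merged into one kernel-verified Lean document; each statement's English description precedes it below -/
import Mathlib

section
/- Let h : ℝ → [0,∞) be convex and set c(x,y) := h(x−y). Let ν0, ν1, μ be Borel probability measures on ℝ with CDFs F_0, F_1, F_μ. Suppose the supports of ν0, ν1 and μ are identical and connected, and that F_0, F_1, F_μ are continuous and strictly increasing on their (common) support. Then ∫_ℝ c(F_0(t), F_1(t)) μ(dt) = T_c((F_0)_#μ, (F_1)_#μ), where (F_k)_#μ denotes the pushforward of μ by F_k and T_c is the minimal (Kantorovich) transport cost with cost function c. -/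
open MeasureTheory Set

/-- The cumulative distribution function of a Borel probability measure on `ℝ`. -/
noncomputable def mcdf (ν : MeasureTheory.Measure ℝ) (t : ℝ) : ℝ := (ν (Set.Iic t)).toReal

/-- The topological support of a Borel measure on `ℝ`: points all of whose
neighborhoods have positive measure. -/
def msupport (ν : MeasureTheory.Measure ℝ) : Set ℝ := {x : ℝ | ∀ U ∈ nhds x, ν U ≠ 0}

/-- `γ` is a coupling of `μ` and `ν`. -/
def IsCoupling (γ : MeasureTheory.Measure (ℝ × ℝ)) (μ ν : MeasureTheory.Measure ℝ) : Prop :=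
  γ.map Prod.fst = μ ∧ γ.map Prod.snd = ν

/-- The minimal (Kantorovich) transport cost between `μ` and `ν` for the cost `c`. -/
noncomputable def Tcost (c : ℝ → ℝ → ℝ) (μ ν : MeasureTheory.Measure ℝ) : ℝ :=
  sInf { r : ℝ | ∃ γ : MeasureTheory.Measure (ℝ × ℝ),
    MeasureTheory.IsProbabilityMeasure γ ∧ IsCoupling γ μ ν ∧ r = ∫ p, c p.1 p.2 ∂γ }

/-!
The map `t ↦ (F₀ t, F₁ t)` pushes `μ` to a coupling of the two laws, which realizes the left-hand
side, so it suffices to show that this comonotone coupling is optimal. For a hinge cost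
`(x - y - b)⁺` the layer-cake formula writes the cost of a coupling `γ` as
`∫ γ {y + b < t ≤ x} dt`, and each quadrant mass is smallest for the comonotone coupling, where it
equals `(P(F₀ ≥ t) - P(F₁ ≥ t - b))⁺` (Fréchet–Hoeffding). Affine costs take the same value on all
couplings. Finally, on the bounded range of `F₀ - F₁`, a continuous convex `h` is approximated
uniformly from above by its piecewise linear interpolants, which are affine functions plus
nonnegative combinations of hinges.
-/

section Coupling

variable {α : Type*} [MeasurableSpace α] {μ : Measure α} {f g : α → ℝ}

lemma isCoupling_map_prodMk (hf : Measurable f) (hg : Measurable g) :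
    IsCoupling (μ.map fun x => (f x, g x)) (μ.map f) (μ.map g) :=
  ⟨by rw [Measure.map_map measurable_fst (hf.prodMk hg)]; rfl,
    by rw [Measure.map_map measurable_snd (hf.prodMk hg)]; rfl⟩

open ProbabilityTheory in
lemma integral_sub_eq_of_isCoupling (hfm : Measurable f) (hgm : Measurable g)
    (hf : Integrable f μ) (hg : Integrable g μ) {γ : Measure (ℝ × ℝ)}
    (hγ : IsCoupling γ (μ.map f) (μ.map g)) :
    ∫ x, (f x - g x) ∂μ = ∫ p, (p.1 - p.2) ∂γ := by
  have hfst : IdentDistrib f Prod.fst μ γ := ⟨hfm.aemeasurable, by fun_prop, hγ.1.symm⟩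
  have hsnd : IdentDistrib g Prod.snd μ γ := ⟨hgm.aemeasurable, by fun_prop, hγ.2.symm⟩
  rw [integral_sub hf hg, integral_sub (hfst.integrable_snd hf) (hsnd.integrable_snd hg),
    hfst.integral_eq, hsnd.integral_eq]

end Coupling

section Comonotone

variable {α : Type*} [MeasurableSpace α]

lemma lintegral_ofReal_sub_eq_lintegral_measure (κ : Measure α) [SFinite κ] {X Y : α → ℝ}
    (hX : Measurable X) (hY : Measurable Y) :
    ∫⁻ x, ENNReal.ofReal (X x - Y x) ∂κ = ∫⁻ t, κ {x | Y x < t ∧ t ≤ X x} := by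
  have hS : MeasurableSet {q : α × ℝ | Y q.1 < q.2 ∧ q.2 ≤ X q.1} :=
    (measurableSet_lt (hY.comp measurable_fst) measurable_snd).inter
      (measurableSet_le measurable_snd (hX.comp measurable_fst))
  calc ∫⁻ x, ENNReal.ofReal (X x - Y x) ∂κ = ∫⁻ x, volume (Ioc (Y x) (X x)) ∂κ := by
        simp only [Real.volume_Ioc]
    _ = κ.prod volume {q : α × ℝ | Y q.1 < q.2 ∧ q.2 ≤ X q.1} := (Measure.prod_apply hS).symm
    _ = ∫⁻ t, κ {x | Y x < t ∧ t ≤ X x} := Measure.prod_apply_symm hS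

variable [LinearOrder α] {μ : Measure α} [IsFiniteMeasure μ] {f g : α → ℝ}

/-- The left side is the mass of the quadrant `{y < s, t ≤ x}` under the comonotone coupling
`(f, g)_# μ`, which is thus minimal among all couplings of `f_# μ` and `g_# μ`. -/
lemma measure_comonotone_quadrant_le (hf : Monotone f) (hg : Monotone g) (hfm : Measurable f)
    (hgm : Measurable g) {γ : Measure (ℝ × ℝ)} (hγ : IsCoupling γ (μ.map f) (μ.map g))
    (s t : ℝ) :
    μ {x | g x < s ∧ t ≤ f x} ≤ γ {p | p.2 < s ∧ t ≤ p.1} := by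
  set U := f ⁻¹' Ici t
  set V := g ⁻¹' Ici s
  have hslice : {x | g x < s ∧ t ≤ f x} = U \ V := by
    ext x; simp [U, V, and_comm]
  have hU : γ (Prod.fst ⁻¹' Ici t) = μ U := by
    rw [← Measure.map_apply measurable_fst measurableSet_Ici, hγ.1,
      Measure.map_apply hfm measurableSet_Ici]
  have hV : γ (Prod.snd ⁻¹' Ici s) = μ V := by
    rw [← Measure.map_apply measurable_snd measurableSet_Ici, hγ.2,
      Measure.map_apply hgm measurableSet_Ici]
  rw [hslice]
  rcases (isUpperSet_Ici t |>.preimage hf).total (isUpperSet_Ici s |>.preimage hg) with hUV | hVU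
  · simp [show U \ V = ∅ from sdiff_eq_empty.2 hUV]
  · have hcover : Prod.fst ⁻¹' Ici t ⊆ {p : ℝ × ℝ | p.2 < s ∧ t ≤ p.1} ∪ Prod.snd ⁻¹' Ici s := by
      intro p hp
      by_cases hps : s ≤ p.2
      · exact Or.inr hps
      · exact Or.inl ⟨not_le.1 hps, hp⟩
    calc μ (U \ V) = μ U - μ V :=
          measure_sdiff hVU (hgm measurableSet_Ici).nullMeasurableSet (measure_ne_top μ V)
      _ = γ (Prod.fst ⁻¹' Ici t) - γ (Prod.snd ⁻¹' Ici s) := by rw [hU, hV]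
      _ ≤ γ {p | p.2 < s ∧ t ≤ p.1} := by
        rw [tsub_le_iff_right]
        exact (measure_mono hcover).trans (measure_union_le _ _)

lemma lintegral_comonotone_ofReal_sub_le (hf : Monotone f) (hg : Monotone g)
    (hfm : Measurable f) (hgm : Measurable g) {γ : Measure (ℝ × ℝ)} [SFinite γ]
    (hγ : IsCoupling γ (μ.map f) (μ.map g)) (a : ℝ) :
    ∫⁻ x, ENNReal.ofReal (f x - g x - a) ∂μ ≤ ∫⁻ p, ENNReal.ofReal (p.1 - p.2 - a) ∂γ := by
  simp only [sub_sub]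
  rw [lintegral_ofReal_sub_eq_lintegral_measure μ hfm (hgm.add_const a),
    lintegral_ofReal_sub_eq_lintegral_measure γ measurable_fst (measurable_snd.add_const a)]
  refine lintegral_mono fun t => ?_
  simp only [← lt_sub_iff_add_lt]
  exact measure_comonotone_quadrant_le hf hg hfm hgm hγ (t - a) t

lemma integral_comonotone_max_sub_le (hf : Monotone f) (hg : Monotone g)
    (hfm : Measurable f) (hgm : Measurable g) {γ : Measure (ℝ × ℝ)} [SFinite γ]
    (hγ : IsCoupling γ (μ.map f) (μ.map g)) (b : ℝ)
    (hint : Integrable (fun p : ℝ × ℝ => max (p.1 - p.2 - b) 0) γ) :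
    ∫ x, max (f x - g x - b) 0 ∂μ ≤ ∫ p, max (p.1 - p.2 - b) 0 ∂γ := by
  rw [integral_eq_lintegral_of_nonneg_ae (f := fun x => max (f x - g x - b) 0)
      (ae_of_all _ fun _ => le_max_right _ _) (by fun_prop),
    integral_eq_lintegral_of_nonneg_ae (f := fun p : ℝ × ℝ => max (p.1 - p.2 - b) 0)
      (ae_of_all _ fun _ => le_max_right _ _) hint.aestronglyMeasurable]
  refine ENNReal.toReal_mono hint.lintegral_lt_top.ne ?_
  simpa using lintegral_comonotone_ofReal_sub_le hf hg hfm hgm hγ b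

end Comonotone

section HingeInterpolation

noncomputable def hingeWeight (h : ℝ → ℝ) (a : ℕ → ℝ) (i : ℕ) : ℝ :=
  slope h (a (i + 1)) (a (i + 2)) - slope h (a i) (a (i + 1))

/-- The piecewise linear interpolant of `h` at the nodes `a 0, …, a (m + 1)`, written as an
affine function plus hinges at the inner nodes, weighted by the jumps of the slope. -/
noncomputable def hingeInterp (h : ℝ → ℝ) (a : ℕ → ℝ) (m : ℕ) (z : ℝ) : ℝ :=
  h (a 0) + slope h (a 0) (a 1) * (z - a 0) +
    ∑ i ∈ Finset.range m, hingeWeight h a i * max (z - a (i + 1)) 0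

lemma hingeInterp_eq_chord {h : ℝ → ℝ} {a : ℕ → ℝ} (ha : Monotone a) {m K : ℕ} (hK : K ≤ m)
    {z : ℝ} (hz : z ∈ Icc (a K) (a (K + 1))) :
    hingeInterp h a m z = h (a K) + slope h (a K) (a (K + 1)) * (z - a K) := by
  have htelescope : ∀ k, h (a 0) + slope h (a 0) (a 1) * (z - a 0) +
      ∑ i ∈ Finset.range k, hingeWeight h a i * (z - a (i + 1)) =
      h (a k) + slope h (a k) (a (k + 1)) * (z - a k) := by
    intro k
    induction k with
    | zero => simp
    | succ k ih =>
      rw [Finset.sum_range_succ, ← add_assoc, ih, hingeWeight]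
      have := sub_smul_slope h (a k) (a (k + 1))
      simp only [smul_eq_mul, vsub_eq_sub] at this
      linear_combination this
  have hlow : ∑ i ∈ Finset.range K, hingeWeight h a i * max (z - a (i + 1)) 0 =
      ∑ i ∈ Finset.range K, hingeWeight h a i * (z - a (i + 1)) :=
    Finset.sum_congr rfl fun i hi => by
      rw [max_eq_left (sub_nonneg.2 ((ha (Finset.mem_range.1 hi)).trans hz.1))]
  have hhigh : ∑ i ∈ Finset.Ico K m, hingeWeight h a i * max (z - a (i + 1)) 0 = 0 :=
    Finset.sum_eq_zero fun i hi => by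
      rw [max_eq_right (sub_nonpos.2 (hz.2.trans (ha (by simp at hi; omega)))), mul_zero]
  rw [hingeInterp, ← Finset.sum_range_add_sum_Ico _ hK, hhigh, add_zero, hlow, htelescope]

lemma ConvexOn.le_chord {s : Set ℝ} {h : ℝ → ℝ} (hconv : ConvexOn ℝ s h) {x y z : ℝ}
    (hx : x ∈ s) (hy : y ∈ s) (hz : z ∈ Icc x y) :
    h z ≤ h x + slope h x y * (z - x) := by
  rcases hz.1.eq_or_lt with rfl | hxz
  · simp
  have hz_s : z ∈ s := hconv.1.ordConnected.out hx hy hz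
  have hslope : slope h x z ≤ slope h x y :=
    hconv.slope_mono hx ⟨hz_s, hxz.ne'⟩ ⟨hy, (hxz.trans_le hz.2).ne'⟩ hz.2
  have := sub_smul_slope h x z
  simp only [smul_eq_mul, vsub_eq_sub] at this
  nlinarith [sub_pos.2 hxz]

lemma chord_le_max (h : ℝ → ℝ) {x y z : ℝ} (hz : z ∈ Icc x y) :
    h x + slope h x y * (z - x) ≤ max (h x) (h y) := by
  have hy := sub_smul_slope h x y
  simp only [smul_eq_mul, vsub_eq_sub] at hy
  rcases le_total 0 (slope h x y) with hs | hs
  · exact le_max_of_le_right (by nlinarith [hz.2])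
  · exact le_max_of_le_left (by nlinarith [hz.1])

lemma exists_mem_Icc_succ {a : ℕ → ℝ} {z : ℝ} (h₀ : a 0 ≤ z) :
    ∀ n, z ≤ a (n + 1) → ∃ K ≤ n, z ∈ Icc (a K) (a (K + 1))
  | 0, hz => ⟨0, le_rfl, h₀, hz⟩
  | n + 1, hz => by
    by_cases hzn : z ≤ a (n + 1)
    · obtain ⟨K, hK, hzK⟩ := exists_mem_Icc_succ h₀ n hzn
      exact ⟨K, hK.trans n.le_succ, hzK⟩
    · exact ⟨n + 1, le_rfl, (not_le.1 hzn).le, hz⟩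

lemma ConvexOn.exists_hingeInterp_approx {h : ℝ → ℝ} {l u : ℝ} (hlu : l < u)
    (hconv : ConvexOn ℝ (Icc l u) h) (hcont : ContinuousOn h (Icc l u)) {ε : ℝ} (hε : 0 < ε) :
    ∃ (a : ℕ → ℝ) (m : ℕ),
      (∀ i < m, 0 ≤ hingeWeight h a i) ∧
      ∀ z ∈ Icc l u, h z ≤ hingeInterp h a m z ∧ hingeInterp h a m z ≤ h z + ε := by
  obtain ⟨δ, hδ, hclose⟩ := Metric.uniformContinuousOn_iff_le.1
    (isCompact_Icc.uniformContinuousOn_of_continuous hcont) ε hε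
  obtain ⟨n, hn⟩ := exists_nat_gt ((u - l) / δ)
  set d := (u - l) / (n + 1)
  have hd : 0 < d := div_pos (sub_pos.2 hlu) n.cast_add_one_pos
  have hdδ : d ≤ δ := by
    rw [div_le_iff₀ n.cast_add_one_pos]
    rw [div_lt_iff₀ hδ] at hn
    nlinarith
  set a : ℕ → ℝ := fun k => l + k * d
  have ha : StrictMono a := fun i j hij => by
    simp only [a]; gcongr
  have ha_succ : ∀ k, a (k + 1) = a k + d := fun k => by simp only [a]; push_cast; ring
  have ha_last : a (n + 1) = u := by simp only [a, d]; push_cast; field_simp; ring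
  have ha_mem : ∀ k ≤ n + 1, a k ∈ Icc l u := fun k hk =>
    ⟨by simpa [a] using ha.monotone (Nat.zero_le k), ha_last ▸ ha.monotone hk⟩
  refine ⟨a, n, fun i hi => ?_, fun z hz => ?_⟩
  · rw [hingeWeight, sub_nonneg, slope_def_field, slope_def_field]
    exact hconv.slope_mono_adjacent (ha_mem i (by omega)) (ha_mem (i + 2) (by omega))
      (ha (by omega)) (ha (by omega))
  obtain ⟨K, hK, hzK⟩ := exists_mem_Icc_succ (a := a) (by simpa [a] using hz.1) n
    (ha_last ▸ hz.2)
  have hnode_le : ∀ k ≤ n + 1, a k ∈ Icc (a K) (a (K + 1)) → h (a k) ≤ h z + ε :=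
    fun k hk hak => by
      have hdist : dist (a k) z ≤ δ := by
        rw [Real.dist_eq, abs_le]
        constructor <;> linarith [hzK.1, hzK.2, hak.1, hak.2, ha_succ K]
      have := hclose _ (ha_mem k hk) _ hz hdist
      rw [Real.dist_eq, abs_le] at this
      linarith [this.2]
  rw [hingeInterp_eq_chord ha.monotone hK hzK]
  exact ⟨hconv.le_chord (ha_mem K (by omega)) (ha_mem (K + 1) (by omega)) hzK,
    (chord_le_max h hzK).trans (max_le
      (hnode_le K (by omega) ⟨le_rfl, ha.monotone K.le_succ⟩)
      (hnode_le (K + 1) (by omega) ⟨ha.monotone K.le_succ, le_rfl⟩))⟩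

end HingeInterpolation

section ConvexOrder

variable {Ω Ω' : Type*} [MeasurableSpace Ω] [MeasurableSpace Ω']

lemma Continuous.integrable_comp_of_ae_mem_Icc {μ : Measure Ω} [IsFiniteMeasure μ] {φ : ℝ → ℝ}
    (hφ : Continuous φ) {X : Ω → ℝ} (hX : AEMeasurable X μ) {l u : ℝ}
    (hXlu : ∀ᵐ ω ∂μ, X ω ∈ Icc l u) : Integrable (fun ω => φ (X ω)) μ := by
  obtain ⟨C, hC⟩ := isCompact_Icc.exists_bound_of_continuousOn hφ.continuousOn
  exact .of_bound (hφ.measurable.comp_aemeasurable hX).aestronglyMeasurable C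
    (hXlu.mono fun ω => hC _)

lemma integral_hingeInterp_comp {μ : Measure Ω} [IsProbabilityMeasure μ] {X : Ω → ℝ}
    (hX : AEMeasurable X μ) {l u : ℝ} (hXlu : ∀ᵐ ω ∂μ, X ω ∈ Icc l u) (h : ℝ → ℝ) (a : ℕ → ℝ)
    (m : ℕ) :
    ∫ ω, hingeInterp h a m (X ω) ∂μ =
      h (a 0) + slope h (a 0) (a 1) * (∫ ω, X ω ∂μ - a 0) +
        ∑ i ∈ Finset.range m, hingeWeight h a i * ∫ ω, max (X ω - a (i + 1)) 0 ∂μ := by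
  have hXint : Integrable X μ := continuous_id.integrable_comp_of_ae_mem_Icc hX hXlu
  have haff : Integrable (fun ω => slope h (a 0) (a 1) * (X ω - a 0)) μ :=
    (hXint.sub (integrable_const _)).const_mul _
  have hhinges : ∀ i ∈ Finset.range m,
      Integrable (fun ω => hingeWeight h a i * max (X ω - a (i + 1)) 0) μ :=
    fun i _ => ((continuous_id.sub continuous_const).max continuous_const
      |>.integrable_comp_of_ae_mem_Icc hX hXlu).const_mul _
  have haff' : Integrable (fun ω => h (a 0) + slope h (a 0) (a 1) * (X ω - a 0)) μ :=
    (integrable_const _).add haff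
  simp only [hingeInterp]
  rw [integral_add haff' (integrable_finsetSum _ hhinges),
    integral_add (integrable_const _) haff, integral_const_mul, integral_sub hXint
    (integrable_const _), integral_finsetSum _ hhinges]
  simp [integral_const_mul]

theorem ConvexOn.integral_comp_le_of_integral_max_sub_le {h : ℝ → ℝ} {l u : ℝ} (hlu : l < u)
    (hconv : ConvexOn ℝ (Icc l u) h) (hcont : Continuous h) {μ : Measure Ω} {ν : Measure Ω'}
    [IsProbabilityMeasure μ] [IsProbabilityMeasure ν] {X : Ω → ℝ} {Y : Ω' → ℝ}
    (hX : AEMeasurable X μ) (hY : AEMeasurable Y ν) (hXlu : ∀ᵐ ω ∂μ, X ω ∈ Icc l u)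
    (hYlu : ∀ᵐ ω ∂ν, Y ω ∈ Icc l u) (hmean : ∫ ω, X ω ∂μ = ∫ ω, Y ω ∂ν)
    (hhinge : ∀ b, ∫ ω, max (X ω - b) 0 ∂μ ≤ ∫ ω, max (Y ω - b) 0 ∂ν) :
    ∫ ω, h (X ω) ∂μ ≤ ∫ ω, h (Y ω) ∂ν := by
  refine le_of_forall_pos_le_add fun ε hε => ?_
  obtain ⟨a, m, hw, happrox⟩ := hconv.exists_hingeInterp_approx hlu hcont.continuousOn hε
  have hHcont : Continuous (hingeInterp h a m) := by unfold hingeInterp; fun_prop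
  have hhY : Integrable (fun ω => h (Y ω)) ν := hcont.integrable_comp_of_ae_mem_Icc hY hYlu
  calc ∫ ω, h (X ω) ∂μ ≤ ∫ ω, hingeInterp h a m (X ω) ∂μ :=
        integral_mono_ae (hcont.integrable_comp_of_ae_mem_Icc hX hXlu)
          (hHcont.integrable_comp_of_ae_mem_Icc hX hXlu) (hXlu.mono fun ω hω => (happrox _ hω).1)
    _ ≤ ∫ ω, hingeInterp h a m (Y ω) ∂ν := by
        rw [integral_hingeInterp_comp hX hXlu, integral_hingeInterp_comp hY hYlu, hmean]
        gcongr with i hi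
        · exact hw i (Finset.mem_range.1 hi)
        · exact hhinge _
    _ ≤ ∫ ω, (h (Y ω) + ε) ∂ν :=
        integral_mono_ae (hHcont.integrable_comp_of_ae_mem_Icc hY hYlu)
          (hhY.add (integrable_const ε)) (hYlu.mono fun ω hω => (happrox _ hω).2)
    _ = ∫ ω, h (Y ω) ∂ν + ε := by simp [integral_add hhY (integrable_const ε)]

end ConvexOrder

open ProbabilityTheory in
theorem integral_comp_sub_le_of_isCoupling {α : Type*} [MeasurableSpace α] [LinearOrder α]
    {μ : Measure α} [IsProbabilityMeasure μ] {f g : α → ℝ} (hf : Monotone f) (hg : Monotone g)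
    (hfm : Measurable f) (hgm : Measurable g) {l u : ℝ} (hf_mem : ∀ x, f x ∈ Icc l u)
    (hg_mem : ∀ x, g x ∈ Icc l u) {h : ℝ → ℝ} (hconv : ConvexOn ℝ univ h)
    {γ : Measure (ℝ × ℝ)} [IsProbabilityMeasure γ] (hγ : IsCoupling γ (μ.map f) (μ.map g)) :
    ∫ x, h (f x - g x) ∂μ ≤ ∫ p, h (p.1 - p.2) ∂γ := by
  have hfst_mem : ∀ᵐ p ∂γ, p.1 ∈ Icc l u :=
    IdentDistrib.ae_mem_snd ⟨hfm.aemeasurable, by fun_prop, hγ.1.symm⟩ measurableSet_Icc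
      (ae_of_all _ hf_mem)
  have hsnd_mem : ∀ᵐ p ∂γ, p.2 ∈ Icc l u :=
    IdentDistrib.ae_mem_snd ⟨hgm.aemeasurable, by fun_prop, hγ.2.symm⟩ measurableSet_Icc
      (ae_of_all _ hg_mem)
  obtain ⟨x₀⟩ := nonempty_of_isProbabilityMeasure μ
  have hlu : l ≤ u := (hf_mem x₀).1.trans (hf_mem x₀).2
  -- any nondegenerate interval containing `[l - u, u - l]` will do
  set I := Icc (l - u - 1) (u - l + 1)
  have hsub_mem : ∀ {x y : ℝ}, x ∈ Icc l u → y ∈ Icc l u → x - y ∈ I := fun hx hy =>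
    ⟨by linarith [hx.1, hy.2], by linarith [hx.2, hy.1]⟩
  have hX : ∀ᵐ x ∂μ, f x - g x ∈ I := ae_of_all _ fun x => hsub_mem (hf_mem x) (hg_mem x)
  have hY : ∀ᵐ p ∂γ, p.1 - p.2 ∈ I := by
    filter_upwards [hfst_mem, hsnd_mem] with p h₁ h₂ using hsub_mem h₁ h₂
  have hYm : AEMeasurable (fun p : ℝ × ℝ => p.1 - p.2) γ := by fun_prop
  refine (hconv.subset (subset_univ _) (convex_Icc _ _)).integral_comp_le_of_integral_max_sub_le
    (by linarith) (hconv.continuousOn isOpen_univ |> continuousOn_univ.1)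
    (hfm.sub hgm).aemeasurable hYm hX hY ?_ fun b => ?_
  · exact integral_sub_eq_of_isCoupling hfm hgm
      (continuous_id.integrable_comp_of_ae_mem_Icc hfm.aemeasurable (ae_of_all _ hf_mem))
      (continuous_id.integrable_comp_of_ae_mem_Icc hgm.aemeasurable (ae_of_all _ hg_mem)) hγ
  · exact integral_comonotone_max_sub_le hf hg hfm hgm hγ b
      ((continuous_id.sub continuous_const).max continuous_const
        |>.integrable_comp_of_ae_mem_Icc hYm hY)

lemma mcdf_mono (ν : Measure ℝ) [IsFiniteMeasure ν] : Monotone (mcdf ν) :=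
  fun _ _ hst => measureReal_mono (Iic_subset_Iic.2 hst)

lemma mcdf_mem_Icc (ν : Measure ℝ) [IsProbabilityMeasure ν] (t : ℝ) : mcdf ν t ∈ Icc 0 1 :=
  ⟨measureReal_nonneg, measureReal_le_one⟩

theorem stmt_2_general (h : ℝ → ℝ) (hconv : ConvexOn ℝ Set.univ h)
    (c : ℝ → ℝ → ℝ) (hc : ∀ x y, c x y = h (x - y))
    (ν0 ν1 μ : MeasureTheory.Measure ℝ)
    [MeasureTheory.IsProbabilityMeasure ν0] [MeasureTheory.IsProbabilityMeasure ν1]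
    [MeasureTheory.IsProbabilityMeasure μ] :
    ∫ t, c (mcdf ν0 t) (mcdf ν1 t) ∂μ
      = Tcost c (μ.map (mcdf ν0)) (μ.map (mcdf ν1)) := by
  obtain rfl : c = fun x y => h (x - y) := funext₂ hc
  have hm₀ := (mcdf_mono ν0).measurable
  have hm₁ := (mcdf_mono ν1).measurable
  have hγ₀ : IsProbabilityMeasure (μ.map fun t => (mcdf ν0 t, mcdf ν1 t)) :=
    Measure.isProbabilityMeasure_map (hm₀.prodMk hm₁).aemeasurable
  rw [Tcost]
  beta_reduce
  refine (IsLeast.csInf_eq ⟨?_, ?_⟩).symm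
  · refine ⟨_, hγ₀, isCoupling_map_prodMk hm₀ hm₁, ?_⟩
    have hcont : Continuous h := continuousOn_univ.1 (hconv.continuousOn isOpen_univ)
    rw [integral_map (hm₀.prodMk hm₁).aemeasurable (by fun_prop)]
  · rintro r ⟨γ, hγ, hcoupling, rfl⟩
    exact integral_comp_sub_le_of_isCoupling (mcdf_mono ν0) (mcdf_mono ν1) hm₀ hm₁
      (mcdf_mem_Icc ν0) (mcdf_mem_Icc ν1) hconv hcoupling

/-- For a convex nonnegative `h`, cost `c(x,y) = h(x-y)`, and measures
`ν0, ν1, μ` with identical connected supports and continuous strictly increasing CDFs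
on their support, `∫ c(F_0(t), F_1(t)) μ(dt)` is the minimal transport cost from
`(F_0)_# μ` to `(F_1)_# μ`. -/
theorem stmt_2 (h : ℝ → ℝ) (hconv : ConvexOn ℝ Set.univ h) (hpos : ∀ x, 0 ≤ h x)
    (c : ℝ → ℝ → ℝ) (hc : ∀ x y, c x y = h (x - y))
    (ν0 ν1 μ : MeasureTheory.Measure ℝ)
    [MeasureTheory.IsProbabilityMeasure ν0] [MeasureTheory.IsProbabilityMeasure ν1]
    [MeasureTheory.IsProbabilityMeasure μ]
    (hsupp0 : msupport ν0 = msupport μ) (hsupp1 : msupport ν1 = msupport μ)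
    (hconn : IsConnected (msupport μ))
    (hcont0 : ContinuousOn (mcdf ν0) (msupport μ))
    (hcont1 : ContinuousOn (mcdf ν1) (msupport μ))
    (hcontμ : ContinuousOn (mcdf μ) (msupport μ))
    (hmono0 : StrictMonoOn (mcdf ν0) (msupport μ))
    (hmono1 : StrictMonoOn (mcdf ν1) (msupport μ))
    (hmonoμ : StrictMonoOn (mcdf μ) (msupport μ)) :
    ∫ t, c (mcdf ν0 t) (mcdf ν1 t) ∂μ
      = Tcost c (μ.map (mcdf ν0)) (μ.map (mcdf ν1)) :=
  stmt_2_general h hconv c hc ν0 ν1 μ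
end

section
/- Let Z be a real-valued random variable and let r_s : ℝ → ℝ be continuous, nondecreasing, globally Lipschitz with r_s(z) → 0 as z → −∞ and r_s(z) → 1 as z → ∞. Define F_Z^{(s)}(t) := 1 − E[r_s(Z − t)]. Then F_Z^{(s)} is a cumulative distribution function (nondecreasing with lim_{t→−∞} F_Z^{(s)}(t) = 0 and lim_{t→+∞} F_Z^{(s)}(t) = 1) and is Lipschitz continuous on ℝ with Lipschitz constant at most Lip(r_s). -/
open MeasureTheory Set Filter

noncomputable def relaxedCDF {Ω : Type*} [MeasurableSpace Ω] (P : Measure Ω) (Z : Ω → ℝ)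
    (r : ℝ → ℝ) (t : ℝ) : ℝ :=
  1 - ∫ ω, r (Z ω - t) ∂P

lemma Monotone.mem_Icc_of_tendsto {r : ℝ → ℝ} {a b : ℝ} (hr : Monotone r)
    (hbot : Tendsto r atBot (nhds a)) (htop : Tendsto r atTop (nhds b)) (x : ℝ) :
    r x ∈ Icc a b :=
  ⟨hr.le_of_tendsto hbot x, hr.ge_of_tendsto htop x⟩

lemma tendsto_const_sub_atBot_atTop (x : ℝ) : Tendsto (fun t : ℝ => x - t) atBot atTop := by
  simpa only [sub_eq_add_neg] using tendsto_atTop_add_const_left _ x tendsto_neg_atBot_atTop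

lemma tendsto_const_sub_atTop_atBot (x : ℝ) : Tendsto (fun t : ℝ => x - t) atTop atBot := by
  simpa only [sub_eq_add_neg] using tendsto_atBot_add_const_left _ x tendsto_neg_atTop_atBot

section RelaxedCDF

variable {Ω : Type*} [MeasurableSpace Ω] {P : Measure Ω} {Z : Ω → ℝ} {r : ℝ → ℝ}

lemma integrable_comp_sub_of_bounded [IsFiniteMeasure P] (hZ : Measurable Z) (hr : Measurable r)
    {C : ℝ} (hC : ∀ x, ‖r x‖ ≤ C) (t : ℝ) : Integrable (fun ω => r (Z ω - t)) P :=
  .of_bound (hr.comp (hZ.sub_const t)).aestronglyMeasurable C (.of_forall fun _ => hC _)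

lemma tendsto_integral_comp_sub [IsProbabilityMeasure P] {l l' : Filter ℝ}
    [l.IsCountablyGenerated] (hZ : Measurable Z) (hr : Measurable r) {C : ℝ}
    (hC : ∀ x, ‖r x‖ ≤ C) (hshift : ∀ x, Tendsto (fun t => x - t) l l') {a : ℝ}
    (hlim : Tendsto r l' (nhds a)) :
    Tendsto (fun t => ∫ ω, r (Z ω - t) ∂P) l (nhds a) := by
  have := tendsto_integral_filter_of_dominated_convergence (μ := P) (l := l) (f := fun _ => a)
    (fun _ => C) (.of_forall fun t => (hr.comp (hZ.sub_const t)).aestronglyMeasurable)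
    (.of_forall fun t => .of_forall fun ω => hC _) (integrable_const C)
    (.of_forall fun ω => hlim.comp (hshift (Z ω)))
  simpa using this

lemma monotone_relaxedCDF (hr : Monotone r)
    (hint : ∀ t, Integrable (fun ω => r (Z ω - t)) P) : Monotone (relaxedCDF P Z r) :=
  fun s t hst => sub_le_sub_left
    (integral_mono (hint t) (hint s) fun ω => hr (by linarith)) 1

lemma lipschitzWith_relaxedCDF [IsProbabilityMeasure P] {K : NNReal} (hr : LipschitzWith K r)
    (hint : ∀ t, Integrable (fun ω => r (Z ω - t)) P) : LipschitzWith K (relaxedCDF P Z r) := by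
  refine LipschitzWith.of_dist_le_mul fun s t => ?_
  have hpt : ∀ ω, ‖r (Z ω - t) - r (Z ω - s)‖ ≤ K * dist s t := fun ω => by
    have := hr.dist_le_mul (Z ω - t) (Z ω - s)
    rwa [dist_sub_left, dist_comm t s, dist_eq_norm] at this
  calc dist (relaxedCDF P Z r s) (relaxedCDF P Z r t)
      = ‖∫ ω, (r (Z ω - t) - r (Z ω - s)) ∂P‖ := by
        rw [integral_sub (hint t) (hint s), relaxedCDF, relaxedCDF, dist_eq_norm,
          sub_sub_sub_cancel_left]
    _ ≤ K * dist s t := by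
        simpa using norm_integral_le_of_norm_le_const (μ := P) (.of_forall hpt)

end RelaxedCDF

theorem stmt_8_general {Ω : Type*} [MeasurableSpace Ω] (P : MeasureTheory.Measure Ω)
    [MeasureTheory.IsProbabilityMeasure P]
    (Z : Ω → ℝ) (hZ : Measurable Z)
    (r : ℝ → ℝ) (K : NNReal) (hrmono : Monotone r)
    (hrLip : LipschitzWith K r)
    (hbot : Filter.Tendsto r Filter.atBot (nhds 0))
    (htop : Filter.Tendsto r Filter.atTop (nhds 1)) :
    Monotone (fun t : ℝ => 1 - ∫ ω, r (Z ω - t) ∂P)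
    ∧ Filter.Tendsto (fun t : ℝ => 1 - ∫ ω, r (Z ω - t) ∂P) Filter.atBot (nhds 0)
    ∧ Filter.Tendsto (fun t : ℝ => 1 - ∫ ω, r (Z ω - t) ∂P) Filter.atTop (nhds 1)
    ∧ LipschitzWith K (fun t : ℝ => 1 - ∫ ω, r (Z ω - t) ∂P) := by
  have hrmeas : Measurable r := hrLip.continuous.measurable
  have hbound : ∀ x, ‖r x‖ ≤ 1 := fun x => by
    obtain ⟨h0, h1⟩ := hrmono.mem_Icc_of_tendsto hbot htop x
    rwa [Real.norm_of_nonneg h0]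
  have hint := integrable_comp_sub_of_bounded (P := P) hZ hrmeas hbound
  refine ⟨monotone_relaxedCDF hrmono hint, ?_, ?_, lipschitzWith_relaxedCDF hrLip hint⟩
  · simpa using (tendsto_integral_comp_sub (P := P) hZ hrmeas hbound
      tendsto_const_sub_atBot_atTop htop).const_sub 1
  · simpa using (tendsto_integral_comp_sub (P := P) hZ hrmeas hbound
      tendsto_const_sub_atTop_atBot hbot).const_sub 1

/-- For a relaxation function `r` (continuous, nondecreasing, globally
Lipschitz with limits `0` at `−∞` and `1` at `+∞`), the relaxed CDF
`F_Z^{(s)}(t) = 1 − E[r(Z − t)]` is a CDF (nondecreasing, with limits `0` at `−∞` and `1`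
at `+∞`) which is Lipschitz with constant at most `Lip(r)`. -/
theorem stmt_8 {Ω : Type*} [MeasurableSpace Ω] (P : MeasureTheory.Measure Ω)
    [MeasureTheory.IsProbabilityMeasure P]
    (Z : Ω → ℝ) (hZ : Measurable Z)
    (r : ℝ → ℝ) (K : NNReal) (hrcont : Continuous r) (hrmono : Monotone r)
    (hrLip : LipschitzWith K r)
    (hbot : Filter.Tendsto r Filter.atBot (nhds 0))
    (htop : Filter.Tendsto r Filter.atTop (nhds 1)) :
    Monotone (fun t : ℝ => 1 - ∫ ω, r (Z ω - t) ∂P)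
    ∧ Filter.Tendsto (fun t : ℝ => 1 - ∫ ω, r (Z ω - t) ∂P) Filter.atBot (nhds 0)
    ∧ Filter.Tendsto (fun t : ℝ => 1 - ∫ ω, r (Z ω - t) ∂P) Filter.atTop (nhds 1)
    ∧ LipschitzWith K (fun t : ℝ => 1 - ∫ ω, r (Z ω - t) ∂P) :=
  stmt_8_general P Z hZ r K hrmono hrLip hbot htop
end

section
/- Let Z0, Z1 be real-valued random variables with CDFs F_{Z0}, F_{Z1}, let μ be a Borel probability measure on ℝ with left-continuous CDF F̃_μ, and let c : [0,1]² → ℝ be continuous. Then ∫_ℝ c(F_{Z0}(t), F_{Z1}(t)) μ(dt) = ∫_0^1 c(F_{F̃_μ(Z0)}(q), F_{F̃_μ(Z1)}(q)) dq, where F_{F̃_μ(Z_k)} denotes the CDF of the random variable F̃_μ(Z_k). Moreover, if μ is atomless, then F̃_μ may be replaced by F_μ: ∫_ℝ c(F_{Z0}(t), F_{Z1}(t)) μ(dt) = ∫_0^1 c(F_{F_μ(Z0)}(q), F_{F_μ(Z1)}(q)) dq. -/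
open MeasureTheory Set

/-- The left-continuous version of the CDF of `ν`: `F̃_ν(t) = lim_{τ→t⁻} F_ν(τ) = ν((-∞,t))`. -/
noncomputable def mlcdf (ν : MeasureTheory.Measure ℝ) (t : ℝ) : ℝ := (ν (Set.Iio t)).toReal

/-!
Quantile transform: for the quantile function `Q` of `μ`, the image of Lebesgue measure on
`(0, 1)` under `Q` is `μ`, so `∫ g dμ = ∫₀¹ g (Q q) dq`. For all but countably many `q` one has
`F̃_μ x ≤ q ↔ x ≤ Q q`, hence `P(Z ≤ Q q) = P(F̃_μ(Z) ≤ q)` for almost every `q`. When `μ` has no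
atoms, `F_μ = F̃_μ`.
-/

open ProbabilityTheory Filter Topology

lemma volume_Ioo_inter_Iic {a : ℝ} (ha : a ≤ 1) :
    volume (Ioo 0 1 ∩ Iic a) = ENNReal.ofReal a := by
  apply le_antisymm
  · calc volume (Ioo 0 1 ∩ Iic a) ≤ volume (Ioc 0 a) := measure_mono fun x hx => ⟨hx.1.1, hx.2⟩
      _ = ENNReal.ofReal a := by rw [Real.volume_Ioc, sub_zero]
  · calc ENNReal.ofReal a = volume (Ioo 0 a) := by rw [Real.volume_Ioo, sub_zero]
      _ ≤ volume (Ioo 0 1 ∩ Iic a) :=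
        measure_mono fun x hx => ⟨⟨hx.1, hx.2.trans_le ha⟩, hx.2.le⟩

theorem ContinuousOn.measurable_comp {α β γ : Type*} [MeasurableSpace α] [TopologicalSpace β]
    [MeasurableSpace β] [OpensMeasurableSpace β] [TopologicalSpace γ] [MeasurableSpace γ]
    [BorelSpace γ] {f : β → γ} {s : Set β} (hf : ContinuousOn f s) {g : α → β}
    (hg : Measurable g) (hgs : ∀ a, g a ∈ s) : Measurable (f ∘ g) :=
  hf.domRestrict.measurable.comp (hg.subtype_mk (h := hgs))

lemma measurable_toReal_measure_le {Ω : Type*} [MeasurableSpace Ω] (P : Measure Ω)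
    [IsFiniteMeasure P] (Z : Ω → ℝ) : Measurable fun t => (P {ω | Z ω ≤ t}).toReal :=
  Monotone.measurable fun _ _ h =>
    ENNReal.toReal_mono (measure_ne_top _ _) (measure_mono fun _ hω => le_trans hω h)

lemma toReal_measure_mem_Icc {Ω : Type*} [MeasurableSpace Ω] (P : Measure Ω)
    [IsProbabilityMeasure P] (s : Set Ω) : (P s).toReal ∈ Icc (0 : ℝ) 1 :=
  ⟨ENNReal.toReal_nonneg, ENNReal.toReal_le_of_le_ofReal zero_le_one (by simpa using prob_le_one)⟩

/-- Only its values on `(0, 1)` matter: elsewhere the set may be empty or unbounded below. -/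
noncomputable def quantile (ν : Measure ℝ) (q : ℝ) : ℝ :=
  sInf {t | q ≤ cdf ν t}

section Quantile

variable (μ : Measure ℝ) {q : ℝ}

lemma nonempty_setOf_le_cdf (hq : q < 1) : {t | q ≤ cdf μ t}.Nonempty := by
  obtain ⟨t, ht⟩ := ((tendsto_cdf_atTop μ).eventually (eventually_gt_nhds hq)).exists
  exact ⟨t, ht.le⟩

lemma bddBelow_setOf_le_cdf (hq : 0 < q) : BddBelow {t | q ≤ cdf μ t} := by
  obtain ⟨t₀, ht₀⟩ := ((tendsto_cdf_atBot μ).eventually (eventually_lt_nhds hq)).exists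
  refine ⟨t₀, fun t ht => ?_⟩
  by_contra! hlt
  exact (ht.trans (monotone_cdf μ hlt.le)).not_gt ht₀

lemma le_cdf_quantile (hq : q ∈ Ioo 0 1) : q ≤ cdf μ (quantile μ q) := by
  set S := {t | q ≤ cdf μ t}
  have hbdd := bddBelow_setOf_le_cdf μ hq.1
  have : (𝓝[S] (quantile μ q)).NeBot :=
    mem_closure_iff_nhdsWithin_neBot.1 (csInf_mem_closure (nonempty_setOf_le_cdf μ hq.2) hbdd)
  have hcont : ContinuousWithinAt (cdf μ) S (quantile μ q) :=
    ((cdf μ).right_continuous _).mono fun t ht => csInf_le hbdd ht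
  exact ge_of_tendsto hcont (eventually_nhdsWithin_of_forall fun t ht => ht)

lemma quantile_le_iff (hq : q ∈ Ioo 0 1) {t : ℝ} : quantile μ q ≤ t ↔ q ≤ cdf μ t :=
  ⟨fun h => (le_cdf_quantile μ hq).trans (monotone_cdf μ h),
    fun h => csInf_le (bddBelow_setOf_le_cdf μ hq.1) h⟩

lemma monotoneOn_quantile : MonotoneOn (quantile μ) (Ioo 0 1) := fun _ hq _ hq' h =>
  csInf_le_csInf (bddBelow_setOf_le_cdf μ hq.1) (nonempty_setOf_le_cdf μ hq'.2)
    fun _ ht => h.trans ht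

lemma aemeasurable_quantile : AEMeasurable (quantile μ) (volume.restrict (Ioo 0 1)) :=
  aemeasurable_restrict_of_monotoneOn measurableSet_Ioo (monotoneOn_quantile μ)

variable [IsProbabilityMeasure μ]

lemma map_quantile_volume : (volume.restrict (Ioo 0 1)).map (quantile μ) = μ := by
  refine (Measure.ext_of_Iic μ _ fun a => ?_).symm
  rw [Measure.map_apply_of_aemeasurable (aemeasurable_quantile μ) measurableSet_Iic,
    Measure.restrict_apply' measurableSet_Ioo]
  have : quantile μ ⁻¹' Iic a ∩ Ioo 0 1 = Ioo 0 1 ∩ Iic (cdf μ a) := by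
    ext q
    simp only [mem_inter_iff, mem_preimage, mem_Iic]
    exact ⟨fun ⟨h, hq⟩ => ⟨hq, (quantile_le_iff μ hq).1 h⟩,
      fun ⟨hq, h⟩ => ⟨(quantile_le_iff μ hq).2 h, hq⟩⟩
  rw [this, volume_Ioo_inter_Iic (cdf_le_one μ a), ofReal_cdf]

lemma integral_comp_quantile {E : Type*} [NormedAddCommGroup E] [NormedSpace ℝ E] {g : ℝ → E}
    (hg : AEStronglyMeasurable g μ) : ∫ q in Ioo 0 1, g (quantile μ q) = ∫ t, g t ∂μ := by
  rw [← integral_map (aemeasurable_quantile μ) (by rwa [map_quantile_volume]),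
    map_quantile_volume]

lemma mlcdf_eq_leftLim (x : ℝ) : mlcdf μ x = Function.leftLim (cdf μ) x := by
  have h := (cdf μ).measure_Iio (tendsto_cdf_atBot μ) x
  rw [measure_cdf, sub_zero] at h
  rw [mlcdf, h, ENNReal.toReal_ofReal]
  exact (cdf_nonneg μ (x - 1)).trans ((monotone_cdf μ).le_leftLim (sub_one_lt x))

lemma mlcdf_quantile_le (hq : q ∈ Ioo 0 1) : mlcdf μ (quantile μ q) ≤ q := by
  rw [mlcdf_eq_leftLim]
  refine le_of_tendsto ((monotone_cdf μ).tendsto_leftLim _)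
    (eventually_nhdsWithin_of_forall fun t ht => ?_)
  exact (not_le.1 fun h => (not_le.2 ht) ((quantile_le_iff μ hq).2 h)).le

lemma mlcdf_le_iff_le_quantile (hq : q ∈ Ioo 0 1) (hq' : q ∉ range fun r : ℚ => cdf μ r)
    {x : ℝ} : mlcdf μ x ≤ q ↔ x ≤ quantile μ q := by
  refine ⟨fun hx => ?_, fun hx => ?_⟩
  · -- a rational strictly between `quantile μ q` and `x` would satisfy `cdf μ r = q`
    by_contra! hlt
    obtain ⟨r, hr, hrx⟩ := exists_rat_btwn hlt
    refine hq' ⟨r, le_antisymm ?_ ((quantile_le_iff μ hq).1 hr.le)⟩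
    calc cdf μ r ≤ mlcdf μ x := by
          rw [mlcdf_eq_leftLim]; exact (monotone_cdf μ).le_leftLim hrx
      _ ≤ q := hx
  · calc mlcdf μ x ≤ mlcdf μ (quantile μ q) := by
          simp only [mlcdf_eq_leftLim]; exact (monotone_cdf μ).leftLim hx
      _ ≤ q := mlcdf_quantile_le μ hq

lemma ae_mlcdf_le_iff_le_quantile :
    ∀ᵐ q ∂volume.restrict (Ioo 0 1), ∀ x, mlcdf μ x ≤ q ↔ x ≤ quantile μ q := by
  have hcount : ∀ᵐ q ∂volume, q ∉ range fun r : ℚ => cdf μ r :=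
    measure_eq_zero_iff_ae_notMem.1 ((countable_range _).measure_zero _)
  filter_upwards [ae_restrict_of_ae hcount, ae_restrict_mem measurableSet_Ioo]
    with q hq' hq x using mlcdf_le_iff_le_quantile μ hq hq'

end Quantile

lemma mcdf_eq_mlcdf {μ : Measure ℝ} (hμ : ∀ x, μ {x} = 0) : mcdf μ = mlcdf μ :=
  funext fun t => by rw [mcdf, mlcdf, measure_congr (Iio_ae_eq_Iic' (hμ t))]

lemma integral_comp_cdf_eq_of_ae_le_iff_le_quantile {Ω : Type*} [MeasurableSpace Ω]
    (P : Measure Ω) [IsProbabilityMeasure P] (Z₀ Z₁ : Ω → ℝ) (μ : Measure ℝ)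
    [IsProbabilityMeasure μ] {c : ℝ → ℝ → ℝ}
    (hc : ContinuousOn (fun p : ℝ × ℝ => c p.1 p.2) (Icc 0 1 ×ˢ Icc 0 1)) {F : ℝ → ℝ}
    (hF : ∀ᵐ q ∂volume.restrict (Ioo 0 1), ∀ x, F x ≤ q ↔ x ≤ quantile μ q) :
    ∫ t, c (P {ω | Z₀ ω ≤ t}).toReal (P {ω | Z₁ ω ≤ t}).toReal ∂μ
      = ∫ q in (0 : ℝ)..1, c (P {ω | F (Z₀ ω) ≤ q}).toReal (P {ω | F (Z₁ ω) ≤ q}).toReal := by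
  have hmeas : Measurable fun t => c (P {ω | Z₀ ω ≤ t}).toReal (P {ω | Z₁ ω ≤ t}).toReal :=
    hc.measurable_comp ((measurable_toReal_measure_le P Z₀).prodMk
      (measurable_toReal_measure_le P Z₁)) fun _ =>
        ⟨toReal_measure_mem_Icc P _, toReal_measure_mem_Icc P _⟩
  rw [intervalIntegral.integral_of_le zero_le_one, integral_Ioc_eq_integral_Ioo,
    ← integral_comp_quantile μ hmeas.aestronglyMeasurable]
  refine integral_congr_ae ?_
  filter_upwards [hF] with q hq
  simp only [hq]

theorem stmt_15_general {Ω : Type*} [MeasurableSpace Ω] (P : MeasureTheory.Measure Ω)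
    [MeasureTheory.IsProbabilityMeasure P]
    (Z0 Z1 : Ω → ℝ)
    (μ : MeasureTheory.Measure ℝ) [MeasureTheory.IsProbabilityMeasure μ]
    (c : ℝ → ℝ → ℝ)
    (hc : ContinuousOn (fun p : ℝ × ℝ => c p.1 p.2)
      (Set.Icc (0 : ℝ) 1 ×ˢ Set.Icc (0 : ℝ) 1)) :
    (∫ t, c ((P {ω | Z0 ω ≤ t}).toReal) ((P {ω | Z1 ω ≤ t}).toReal) ∂μ
      = ∫ q in (0 : ℝ)..1,
          c ((P {ω | mlcdf μ (Z0 ω) ≤ q}).toReal) ((P {ω | mlcdf μ (Z1 ω) ≤ q}).toReal))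
    ∧ ((∀ x : ℝ, μ {x} = 0) →
        ∫ t, c ((P {ω | Z0 ω ≤ t}).toReal) ((P {ω | Z1 ω ≤ t}).toReal) ∂μ
          = ∫ q in (0 : ℝ)..1,
              c ((P {ω | mcdf μ (Z0 ω) ≤ q}).toReal)
                ((P {ω | mcdf μ (Z1 ω) ≤ q}).toReal)) := by
  refine ⟨integral_comp_cdf_eq_of_ae_le_iff_le_quantile P Z0 Z1 μ hc
    (ae_mlcdf_le_iff_le_quantile μ), fun hμ => ?_⟩
  refine integral_comp_cdf_eq_of_ae_le_iff_le_quantile P Z0 Z1 μ hc ?_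
  simpa only [mcdf_eq_mlcdf hμ] using ae_mlcdf_le_iff_le_quantile μ

/-- For continuous `c : [0,1]² → ℝ`,
`∫ c(F_{Z0}(t), F_{Z1}(t)) μ(dt) = ∫_0^1 c(F_{F̃_μ(Z0)}(q), F_{F̃_μ(Z1)}(q)) dq`,
and if `μ` is atomless, the same holds with `F_μ` in place of `F̃_μ`. -/
theorem stmt_15 {Ω : Type*} [MeasurableSpace Ω] (P : MeasureTheory.Measure Ω)
    [MeasureTheory.IsProbabilityMeasure P]
    (Z0 Z1 : Ω → ℝ) (hZ0 : Measurable Z0) (hZ1 : Measurable Z1)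
    (μ : MeasureTheory.Measure ℝ) [MeasureTheory.IsProbabilityMeasure μ]
    (c : ℝ → ℝ → ℝ)
    (hc : ContinuousOn (fun p : ℝ × ℝ => c p.1 p.2)
      (Set.Icc (0 : ℝ) 1 ×ˢ Set.Icc (0 : ℝ) 1)) :
    (∫ t, c ((P {ω | Z0 ω ≤ t}).toReal) ((P {ω | Z1 ω ≤ t}).toReal) ∂μ
      = ∫ q in (0 : ℝ)..1,
          c ((P {ω | mlcdf μ (Z0 ω) ≤ q}).toReal) ((P {ω | mlcdf μ (Z1 ω) ≤ q}).toReal))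
    ∧ ((∀ x : ℝ, μ {x} = 0) →
        ∫ t, c ((P {ω | Z0 ω ≤ t}).toReal) ((P {ω | Z1 ω ≤ t}).toReal) ∂μ
          = ∫ q in (0 : ℝ)..1,
              c ((P {ω | mcdf μ (Z0 ω) ≤ q}).toReal)
                ((P {ω | mcdf μ (Z1 ω) ≤ q}).toReal)) :=
  stmt_15_general P Z0 Z1 μ c hc
end
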